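/- Suppose (M_0, M_1, ..., M_k) is a sequence of finitely generated F[U]-modules in which consecutive terms have similar skylines, M_0 contains a direct summand F[U]/U^N with N ≥ 1, and M_k ≅ F[U] is free of rank one. Then the direct sum ⊕_{t=0}^{k} M_t contains a direct summand isomorphic to F[U]/U^N ⊕ F[U]/U^{N−1} ⊕ ... ⊕ F[U]/U. -/

import Mathlib

open Polynomial

noncomputable section
abbrev FU := Polynomial (ZMod 2)

abbrev Skyline (n m : ℕ) (h : Fin m → ℕ) :=
  (Fin n → FU) × ((j : Fin m) → FU ⧸ Ideal.span {(X : FU) ^ h j})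

def SimilarSkylines (A B : Type) [AddCommGroup A] [Module FU A]
    [AddCommGroup B] [Module FU B] : Prop :=
  ∃ (n m : ℕ) (h h' : Fin m → ℕ) (k : ℕ),
    (∀ j, 0 < h j) ∧ (∀ j, |(h' j : ℤ) - (h j : ℤ)| ≤ 1) ∧
    Nonempty (A ≃ₗ[FU] Skyline n m h) ∧
    Nonempty (B ≃ₗ[FU] (Skyline n m h' × (Fin k → FU ⧸ Ideal.span {(X : FU)})))

def HasSummandIso (M : Type) [AddCommGroup M] [Module FU M]
    (S : Type) [AddCommGroup S] [Module FU S] : Prop :=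
  ∃ (N P : Submodule FU M), IsCompl N P ∧ Nonempty (N ≃ₗ[FU] S)

/-! Say that a module has a tower longer than `s` if it has a summand `F[U]/U^h` with
`h > s`; this can be detected intrinsically, by a nonzero element of `ker U ∩ im U^s`.
Since similar skylines change tower lengths by at most one, a tower longer than `s + 1`
in `M t` leaves one longer than `s` in `M (t + 1)`. For `s < N` let `τ s` be the last `t`
at which `M t` has a tower longer than `s`: it exists thanks to the summand of `M 0`,
lies below `k` because `M k` is free, and is strictly decreasing in `s`. At `τ s` some
tower is longer than `s` while its partner in `M (τ s + 1)` is not, so it is `F[U]/U^(s+1)`;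
these summands lie in distinct factors `M (τ s)`. -/
section Tower

variable {R : Type*} (u : R)

def HasTowerLongerThan [Semiring R] (s : ℕ) (M : Type*) [AddCommMonoid M] [Module R M] :
    Prop :=
  ∃ x y : M, x ≠ 0 ∧ u • x = 0 ∧ u ^ s • y = x

variable {u}

section Semiring

variable [Semiring R] {s : ℕ} {M M' : Type*} [AddCommMonoid M] [Module R M]
  [AddCommMonoid M'] [Module R M']

theorem HasTowerLongerThan.of_injective {f : M →ₗ[R] M'} (hf : Function.Injective f)
    (h : HasTowerLongerThan u s M) : HasTowerLongerThan u s M' := by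
  obtain ⟨x, y, hx, hux, hy⟩ := h
  exact ⟨f x, f y, (map_ne_zero_iff f hf).mpr hx, by rw [← map_smul, hux, map_zero],
    by rw [← map_smul, hy]⟩

theorem HasTowerLongerThan.of_linearEquiv (e : M ≃ₗ[R] M') (h : HasTowerLongerThan u s M) :
    HasTowerLongerThan u s M' :=
  h.of_injective (f := e.toLinearMap) e.injective

theorem antitone_hasTowerLongerThan : Antitone fun s => HasTowerLongerThan u s M := by
  rintro s s' hss ⟨x, y, hx, hux, hy⟩
  exact ⟨x, u ^ (s' - s) • y, hx, hux, by rw [smul_smul, ← pow_add, Nat.add_sub_cancel' hss, hy]⟩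

theorem hasTowerLongerThan_prod_iff :
    HasTowerLongerThan u s (M × M') ↔ HasTowerLongerThan u s M ∨ HasTowerLongerThan u s M' := by
  refine ⟨?_, ?_⟩
  · rintro ⟨⟨x, x'⟩, ⟨y, y'⟩, hx, hux, hy⟩
    simp only [Prod.smul_mk, Prod.mk.injEq, Prod.mk_eq_zero] at hux hy
    by_cases hx0 : x = 0
    · exact Or.inr ⟨x', y', fun h => hx (Prod.ext hx0 h), hux.2, hy.2⟩
    · exact Or.inl ⟨x, y, hx0, hux.1, hy.1⟩
  · rintro (h | h)
    · exact h.of_injective LinearMap.inl_injective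
    · exact h.of_injective LinearMap.inr_injective

theorem hasTowerLongerThan_pi_iff {ι : Type*} [DecidableEq ι] {C : ι → Type*}
    [∀ i, AddCommMonoid (C i)] [∀ i, Module R (C i)] :
    HasTowerLongerThan u s (∀ i, C i) ↔ ∃ i, HasTowerLongerThan u s (C i) := by
  refine ⟨?_, ?_⟩
  · rintro ⟨x, y, hx, hux, hy⟩
    obtain ⟨i, hi⟩ := Function.ne_iff.mp hx
    exact ⟨i, x i, y i, hi, congrFun hux i, congrFun hy i⟩
  · rintro ⟨i, h⟩
    exact h.of_injective (f := LinearMap.single R C i) (Pi.single_injective i)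

end Semiring

section Domain

variable [CommRing R] [IsDomain R] {s : ℕ}

theorem not_hasTowerLongerThan_self (hu : u ≠ 0) : ¬ HasTowerLongerThan u s R := by
  rintro ⟨x, y, hx, hux, -⟩
  exact hx ((mul_eq_zero.mp hux).resolve_left hu)

theorem hasTowerLongerThan_quotient_iff (hu : u ≠ 0) (hu' : ¬ IsUnit u) {h : ℕ} :
    HasTowerLongerThan u s (R ⧸ Ideal.span {u ^ h}) ↔ s < h := by
  have mk_pow_eq_zero {n : ℕ} : Ideal.Quotient.mk (Ideal.span {u ^ h}) (u ^ n) = 0 ↔ h ≤ n := by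
    rw [Ideal.Quotient.eq_zero_iff_mem, Ideal.mem_span_singleton, pow_dvd_pow_iff hu hu']
  refine ⟨?_, fun hsh => ?_⟩
  · rintro ⟨x, y, hx, -, rfl⟩
    by_contra! hhs
    obtain ⟨q, rfl⟩ := Ideal.Quotient.mk_surjective y
    refine hx ?_
    rw [Algebra.smul_def, Ideal.Quotient.algebraMap_eq, ← map_mul,
      Ideal.Quotient.eq_zero_iff_mem]
    exact Ideal.mul_mem_right _ _ (Ideal.mem_span_singleton.mpr (pow_dvd_pow u hhs))
  · refine ⟨Ideal.Quotient.mk _ (u ^ (h - 1)), Ideal.Quotient.mk _ (u ^ (h - 1 - s)), ?_, ?_, ?_⟩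
    · rw [Ne, mk_pow_eq_zero]; omega
    · rw [Algebra.smul_def, Ideal.Quotient.algebraMap_eq, ← map_mul, ← pow_succ',
        mk_pow_eq_zero]; omega
    · rw [Algebra.smul_def, Ideal.Quotient.algebraMap_eq, ← map_mul, ← pow_add,
        Nat.add_sub_cancel' (by omega : s ≤ h - 1)]

end Domain

end Tower

section Summand

variable {M M' S : Type} [AddCommGroup M] [Module FU M] [AddCommGroup M'] [Module FU M']
  [AddCommGroup S] [Module FU S]

theorem hasSummandIso_iff_exists_comp_eq_id :
    HasSummandIso M S ↔ ∃ (i : S →ₗ[FU] M) (p : M →ₗ[FU] S), p ∘ₗ i = LinearMap.id := by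
  refine ⟨?_, ?_⟩
  · rintro ⟨N, P, hNP, ⟨e⟩⟩
    refine ⟨N.subtype ∘ₗ e.symm.toLinearMap, e.toLinearMap ∘ₗ N.projectionOnto P hNP, ?_⟩
    ext x
    simp [Submodule.projectionOnto_apply_left]
  · rintro ⟨i, p, hpi⟩
    have hpi' : ∀ y, p (i y) = y := LinearMap.congr_fun hpi
    refine ⟨LinearMap.range i, LinearMap.ker (i.rangeRestrict ∘ₗ p),
      LinearMap.isCompl_of_proj ?_,
      ⟨(LinearEquiv.ofInjective i (Function.LeftInverse.injective hpi')).symm⟩⟩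
    rintro ⟨_, y, rfl⟩
    ext
    simp [hpi']

theorem HasSummandIso.of_linearEquiv (e : M ≃ₗ[FU] M') (h : HasSummandIso M S) :
    HasSummandIso M' S := by
  obtain ⟨i, p, hpi⟩ := hasSummandIso_iff_exists_comp_eq_id.mp h
  refine hasSummandIso_iff_exists_comp_eq_id.mpr
    ⟨e.toLinearMap ∘ₗ i, p ∘ₗ e.symm.toLinearMap, ?_⟩
  ext x
  simp [← LinearMap.comp_apply, hpi]

theorem HasSummandIso.hasTowerLongerThan {s : ℕ} (h : HasSummandIso M S)
    (hS : HasTowerLongerThan (X : FU) s S) : HasTowerLongerThan (X : FU) s M := by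
  obtain ⟨i, p, hpi⟩ := hasSummandIso_iff_exists_comp_eq_id.mp h
  exact hS.of_injective (Function.LeftInverse.injective (g := p) (LinearMap.congr_fun hpi))

theorem hasSummandIso_skyline {n m : ℕ} (h : Fin m → ℕ) (j : Fin m) :
    HasSummandIso (Skyline n m h) (FU ⧸ Ideal.span {(X : FU) ^ h j}) :=
  hasSummandIso_iff_exists_comp_eq_id.mpr
    ⟨LinearMap.inr FU _ _ ∘ₗ
        LinearMap.single FU (fun j => FU ⧸ Ideal.span {(X : FU) ^ h j}) j,
      LinearMap.proj j ∘ₗ LinearMap.snd FU _ _,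
      by ext; simp⟩

theorem hasSummandIso_pi_of_injective {ι ι' : Type} [DecidableEq ι] [Fintype ι'] {C : ι → Type}
    [∀ t, AddCommGroup (C t)] [∀ t, Module FU (C t)] {S : ι' → Type}
    [∀ s, AddCommGroup (S s)] [∀ s, Module FU (S s)] {τ : ι' → ι} (hτ : Function.Injective τ)
    (h : ∀ s, HasSummandIso (C (τ s)) (S s)) : HasSummandIso (∀ t, C t) (∀ s, S s) := by
  choose i p hpi using fun s => hasSummandIso_iff_exists_comp_eq_id.mp (h s)
  let I : (∀ s, S s) →ₗ[FU] ∀ t, C t :=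
    ∑ s, LinearMap.single FU C (τ s) ∘ₗ i s ∘ₗ LinearMap.proj s
  have hI : ∀ g s, I g (τ s) = i s (g s) := by
    intro g s
    simp only [I, LinearMap.sum_apply, Finset.sum_apply, LinearMap.comp_apply,
      LinearMap.coe_single, LinearMap.proj_apply]
    rw [Finset.sum_eq_single s (fun s' _ hs' => Pi.single_eq_of_ne (hτ.ne hs').symm _)
      (by simp), Pi.single_eq_same]
  refine hasSummandIso_iff_exists_comp_eq_id.mpr
    ⟨I, LinearMap.pi fun s => p s ∘ₗ LinearMap.proj (τ s),
      LinearMap.ext fun g => funext fun s => ?_⟩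
  simp [hI, ← LinearMap.comp_apply, hpi]

end Summand

section Skyline

variable {s : ℕ}

theorem not_hasTowerLongerThan_X : ¬ HasTowerLongerThan (X : FU) s FU :=
  not_hasTowerLongerThan_self X_ne_zero

theorem hasTowerLongerThan_X_quotient_iff {h : ℕ} :
    HasTowerLongerThan (X : FU) s (FU ⧸ Ideal.span {(X : FU) ^ h}) ↔ s < h :=
  hasTowerLongerThan_quotient_iff X_ne_zero not_isUnit_X

theorem hasTowerLongerThan_skyline_iff {n m : ℕ} {h : Fin m → ℕ} :
    HasTowerLongerThan (X : FU) s (Skyline n m h) ↔ ∃ j, s < h j := by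
  rw [hasTowerLongerThan_prod_iff, hasTowerLongerThan_pi_iff, hasTowerLongerThan_pi_iff]
  simp [not_hasTowerLongerThan_X, hasTowerLongerThan_X_quotient_iff]

end Skyline

namespace SimilarSkylines

variable {A B : Type} [AddCommGroup A] [Module FU A] [AddCommGroup B] [Module FU B] {s : ℕ}

theorem hasTowerLongerThan (hAB : SimilarSkylines A B)
    (hA : HasTowerLongerThan (X : FU) (s + 1) A) : HasTowerLongerThan (X : FU) s B := by
  obtain ⟨n, m, h, h', k, -, hclose, ⟨eA⟩, ⟨eB⟩⟩ := hAB
  obtain ⟨j, hj⟩ := hasTowerLongerThan_skyline_iff.mp (hA.of_linearEquiv eA)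
  have hj' : s < h' j := by have := abs_le.mp (hclose j); omega
  exact (hasTowerLongerThan_prod_iff.mpr
    (Or.inl (hasTowerLongerThan_skyline_iff.mpr ⟨j, hj'⟩))).of_linearEquiv eB.symm

theorem hasSummandIso_of_hasTowerLongerThan (hAB : SimilarSkylines A B)
    (hA : HasTowerLongerThan (X : FU) s A) (hB : ¬ HasTowerLongerThan (X : FU) s B) :
    HasSummandIso A (FU ⧸ Ideal.span {(X : FU) ^ (s + 1)}) := by
  obtain ⟨n, m, h, h', k, -, hclose, ⟨eA⟩, ⟨eB⟩⟩ := hAB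
  obtain ⟨j, hj⟩ := hasTowerLongerThan_skyline_iff.mp (hA.of_linearEquiv eA)
  have hj' : ¬ s < h' j := fun hs => hB ((hasTowerLongerThan_prod_iff.mpr
    (Or.inl (hasTowerLongerThan_skyline_iff.mpr ⟨j, hs⟩))).of_linearEquiv eB.symm)
  have hhj : h j = s + 1 := by have := abs_le.mp (hclose j); omega
  exact (hhj ▸ hasSummandIso_skyline h j).of_linearEquiv eA.symm

end SimilarSkylines

theorem exists_injective_forall_and_not_succ {P : ℕ → ℕ → Prop} {N k : ℕ}
    (h0 : ∀ s < N, P s 0) (hk : ∀ s, ¬ P s k) (hanti : ∀ t, Antitone (P · t))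
    (hstep : ∀ s t, t < k → P (s + 1) t → P s (t + 1)) :
    ∃ τ : Fin N → Fin k, Function.Injective τ ∧ ∀ s : Fin N, P s (τ s) ∧ ¬ P s (τ s + 1) := by
  classical
  let T s := Nat.findGreatest (P s) k
  have hT : ∀ s < N, P s (T s) := fun s hs => Nat.findGreatest_spec (Nat.zero_le k) (h0 s hs)
  have hTk : ∀ s < N, T s < k := fun s hs =>
    (Nat.findGreatest_le k).lt_of_ne fun he => hk s (he ▸ hT s hs)
  let τ : Fin N → Fin k := fun s => ⟨T s, hTk s s.2⟩
  have hτ : StrictAnti τ := fun s s' hss =>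
    Nat.le_findGreatest (hTk s' s'.2)
      (hstep s (T s') (hTk s' s'.2) (hanti (T s') (Nat.succ_le_of_lt hss) (hT s' s'.2)))
  exact ⟨τ, hτ.injective, fun s =>
    ⟨hT s s.2, Nat.findGreatest_is_greatest (Nat.lt_succ_self _) (hTk s s.2)⟩⟩

theorem stmt17_general (k N : ℕ) (M : ℕ → Type)
    [∀ t, AddCommGroup (M t)] [∀ t, Module FU (M t)]
    (hsim : ∀ t, t < k → SimilarSkylines (M t) (M (t + 1)))
    (hfree : Nonempty (M k ≃ₗ[FU] FU))
    (hsum : HasSummandIso (M 0) (FU ⧸ Ideal.span {(X : FU) ^ N})) :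
    HasSummandIso ((t : Fin (k + 1)) → M t)
      ((i : Fin N) → FU ⧸ Ideal.span {(X : FU) ^ ((i : ℕ) + 1)}) := by
  obtain ⟨τ, hτ, hτP⟩ := exists_injective_forall_and_not_succ
    (P := fun s t => HasTowerLongerThan (X : FU) s (M t))
    (fun _ hs => hsum.hasTowerLongerThan (hasTowerLongerThan_X_quotient_iff.mpr hs))
    (fun _ hk => not_hasTowerLongerThan_X (hk.of_linearEquiv hfree.some))
    (fun _ => antitone_hasTowerLongerThan)
    (fun _ t ht h => (hsim t ht).hasTowerLongerThan h)
  exact hasSummandIso_pi_of_injective (τ := Fin.castSucc ∘ τ)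
    ((Fin.castSucc_injective k).comp hτ) fun s =>
      (hsim (τ s) (τ s).2).hasSummandIso_of_hasTowerLongerThan (hτP s).1 (hτP s).2

/-- If (M₀, …, M_k) is a sequence of finitely generated F[U]-modules in which
consecutive terms have similar skylines, M₀ contains an F[U]/U^N summand
(N ≥ 1), and M_k ≅ F[U], then ⊕_{t=0}^k M_t contains a direct summand
isomorphic to F[U]/U^N ⊕ F[U]/U^{N−1} ⊕ ⋯ ⊕ F[U]/U. -/
theorem stmt17 (k N : ℕ) (hN : 1 ≤ N) (M : ℕ → Type)
    [∀ t, AddCommGroup (M t)] [∀ t, Module FU (M t)] [∀ t, Module.Finite FU (M t)]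
    (hsim : ∀ t, t < k → SimilarSkylines (M t) (M (t + 1)))
    (hfree : Nonempty (M k ≃ₗ[FU] FU))
    (hsum : HasSummandIso (M 0) (FU ⧸ Ideal.span {(X : FU) ^ N})) :
    HasSummandIso ((t : Fin (k + 1)) → M t)
      ((i : Fin N) → FU ⧸ Ideal.span {(X : FU) ^ ((i : ℕ) + 1)}) :=
  stmt17_general k N M hsim hfree hsum
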